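/- Let ≺ be any linear (total) order on the vertex set of G with n ≥ 1 vertices. Define a random variable X as follows: pick a vertex v uniformly at random; if d_v = 0 set X = 0; otherwise pick u uniformly at random from Γ(v) and set X = 2·d_v if v ≺ u and X = 0 otherwise. Then E[X] = 2m/n, the average degree of G. -/

import Mathlib

/-!
Each adjacent pair `v ≺ u` is drawn with probability `1 / (n d_v)` and then pays `2 d_v`, so it
contributes exactly `2 / n` to `E[X]`; all other outcomes pay `0`. Orienting each edge from its
`≺`-smaller to its larger end shows that there are exactly `m` such pairs.
-/

open Finset SimpleGraph
open scoped Classical ENNReal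

/-- Expectation of a real-valued function under a `PMF` on a finite type. -/
noncomputable def pmfExp {α : Type*} [Fintype α] (p : PMF α) (f : α → ℝ) : ℝ :=
  ∑ x, (p x).toReal * f x

theorem SimpleGraph.card_adj_lt_eq_card_edgeFinset {V : Type*} [Fintype V] [LinearOrder V]
    (G : SimpleGraph V) [DecidableRel G.Adj] [Fintype G.edgeSet] :
    #{q : V × V | G.Adj q.1 q.2 ∧ q.1 < q.2} = #G.edgeFinset := by
  refine card_nbij' (fun q => s(q.1, q.2)) (fun e => (e.inf, e.sup)) ?_ ?_ ?_ ?_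
  · intro q hq
    simp_all
  · intro e he
    induction e with | _ a b
    rcases lt_trichotomy a b with h | rfl | h
    · simp_all [h.le]
    · simp_all
    · simp_all [h.le, G.adj_comm b a]
  · intro q hq
    simp_all [(mem_filter.1 hq).2.2.le]
  · intro e _
    exact Sym2.sortEquiv.symm_apply_apply e

theorem pmfExp_eq_sum_some {α β : Type*} [Fintype α] [Fintype β] (p : PMF (α × Option β))
    (f : α × Option β → ℝ) (hf : ∀ a, f (a, none) = 0) :
    pmfExp p f = ∑ a, ∑ b, (p (a, some b)).toReal * f (a, some b) := by
  simp [pmfExp, Fintype.sum_prod_type, Fintype.sum_option, hf]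

theorem ENNReal.toReal_one_div_natCast_mul_mul (n d : ℕ) (hd : d ≠ 0) (c : ℝ) :
    (1 / ((n : ℝ≥0∞) * d)).toReal * (c * d) = c / n := by
  rw [one_div, ENNReal.toReal_inv, ENNReal.toReal_mul, ENNReal.toReal_natCast,
    ENNReal.toReal_natCast]
  field_simp

theorem stmt13 {V : Type*} [Fintype V] [DecidableEq V] (G : SimpleGraph V)
    [DecidableRel G.Adj] (lo : LinearOrder V)
    (p : PMF (V × Option V))
    (hp1 : ∀ v u, p (v, some u) =
      if u ∈ G.neighborFinset v
      then 1 / ((Fintype.card V : ℝ≥0∞) * (G.degree v : ℝ≥0∞)) else 0) :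
    pmfExp p (fun x =>
        match x with
        | (v, some u) => if lo.lt v u then 2 * (G.degree v : ℝ) else 0
        | (_, none) => 0)
      = 2 * (G.edgeFinset.card : ℝ) / (Fintype.card V : ℝ) := by
  let := lo
  have weighted_mass : ∀ v u, (p (v, some u)).toReal * (if v < u then 2 * (G.degree v : ℝ) else 0)
      = if G.Adj v u ∧ v < u then 2 / (Fintype.card V : ℝ) else 0 := by
    intro v u
    by_cases hadj : G.Adj v u
    · have hd : G.degree v ≠ 0 := (G.degree_pos_iff_exists_adj v).2 ⟨u, hadj⟩ |>.ne'
      rw [hp1, if_pos ((G.mem_neighborFinset v u).2 hadj)]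
      by_cases hlt : v < u
      · rw [if_pos hlt, if_pos ⟨hadj, hlt⟩, ENNReal.toReal_one_div_natCast_mul_mul _ _ hd]
      · simp [hlt]
    · simp [hp1, hadj]
  calc _ = ∑ v, ∑ u, if G.Adj v u ∧ v < u then 2 / (Fintype.card V : ℝ) else 0 := by
        rw [pmfExp_eq_sum_some _ _ fun _ => rfl]
        exact sum_congr rfl fun v _ => sum_congr rfl fun u _ => weighted_mass v u
    _ = 2 / (Fintype.card V : ℝ) * #{q : V × V | G.Adj q.1 q.2 ∧ q.1 < q.2} := by
        rw [← Fintype.sum_prod_type', sum_ite, sum_const_zero, add_zero, sum_const,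
          nsmul_eq_mul, mul_comm]
    _ = _ := by
        rw [G.card_adj_lt_eq_card_edgeFinset]
        ring
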